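/- Let V₊, V₋ ∈ ℂ and α ∈ ℂ with α ≠ 0, and set z(α) := (V₊ + V₋)/2 − (V₊ − V₋)²/(4α²) − α²/4. The following are equivalent: (a) √(V₊ − z(α)) = −α/2 − (V₊ − V₋)/(2α) and √(V₋ − z(α)) = −α/2 + (V₊ − V₋)/(2α) and z(α) ∉ [V₊,+∞) ∪ [V₋,+∞); (b) Re(−α/2 − (V₊ − V₋)/(2α)) > 0 and Re(−α/2 + (V₊ − V₋)/(2α)) > 0; (c) |Re(V₊ − V₋)·Re α + Im(V₊ − V₋)·Im α| < −|α|²·Re α. -/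

import Mathlib

/-!
With `w± := -α/2 ∓ (V₊ - V₋)/(2α)` one has `V± - z(α) = w±²`. For any `w`, the principal
root of `w²` is `w` and `w²` avoids `(-∞, 0]` exactly when `Re w > 0`; this gives (a) ⟺ (b).
Moreover `Re w± = (-|α|² Re α ∓ ⟨V₊ - V₋, α⟩) / (2|α|²)`, so (b) says
`∓⟨V₊ - V₋, α⟩ < -|α|² Re α`, which is (c).
-/

/-- The principal branch of the complex square root,
holomorphic on `ℂ ∖ (−∞,0]` and positive on `(0,+∞)`. -/
noncomputable def csqrt (z : ℂ) : ℂ := z ^ (1 / 2 : ℂ)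

/-- `z(α) = (V₊ + V₋)/2 − (V₊ − V₋)²/(4α²) − α²/4`. -/
noncomputable def zalpha (Vp Vm α : ℂ) : ℂ :=
  (Vp + Vm) / 2 - (Vp - Vm) ^ 2 / (4 * α ^ 2) - α ^ 2 / 4

lemma csqrt_re_nonneg (z : ℂ) : 0 ≤ (csqrt z).re := by
  unfold csqrt
  rcases eq_or_ne z 0 with rfl | hz
  · simp
  rw [Complex.cpow_def_of_ne_zero hz, Complex.exp_re]
  have him : (Complex.log z * (1 / 2)).im = z.arg / 2 := by
    simp [Complex.mul_im, Complex.log_im, div_eq_mul_inv]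
  rw [him]
  refine mul_nonneg (Real.exp_nonneg _) (Real.cos_nonneg_of_mem_Icc ⟨?_, ?_⟩)
  · linarith [Complex.neg_pi_lt_arg z]
  · linarith [Complex.arg_le_pi z, Real.pi_pos]

lemma csqrt_sq (z : ℂ) : csqrt z ^ 2 = z := by
  simp [csqrt]

lemma csqrt_sq_of_re_pos {w : ℂ} (hw : 0 < w.re) : csqrt (w ^ 2) = w := by
  have hprod : (csqrt (w ^ 2) - w) * (csqrt (w ^ 2) + w) = 0 := by
    linear_combination csqrt_sq (w ^ 2)
  rcases mul_eq_zero.1 hprod with h | h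
  · exact sub_eq_zero.1 h
  · have hre := csqrt_re_nonneg (w ^ 2)
    rw [eq_neg_of_add_eq_zero_left h, Complex.neg_re] at hre
    linarith

lemma Complex.re_eq_zero_iff_exists_sq_eq_neg (w : ℂ) :
    w.re = 0 ↔ ∃ t : ℝ, 0 ≤ t ∧ w ^ 2 = -t := by
  constructor
  · intro h
    refine ⟨w.im ^ 2, sq_nonneg _, ?_⟩
    apply Complex.ext <;> simp [sq, h]
  · rintro ⟨t, ht, hw⟩
    have hre : w.re ^ 2 - w.im ^ 2 = -t := by simpa [sq] using congrArg Complex.re hw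
    have him : w.re * w.im = 0 := by
      have := congrArg Complex.im hw
      simp only [sq, Complex.mul_im, Complex.neg_im, Complex.ofReal_im] at this
      linarith
    rcases mul_eq_zero.1 him with h | h
    · exact h
    · nlinarith

lemma csqrt_sq_eq_and_sq_ne_neg_iff (w : ℂ) :
    (csqrt (w ^ 2) = w ∧ ∀ t : ℝ, 0 ≤ t → w ^ 2 ≠ -t) ↔ 0 < w.re := by
  constructor
  · rintro ⟨hsqrt, hray⟩
    have hnonneg : 0 ≤ w.re := hsqrt ▸ csqrt_re_nonneg (w ^ 2)
    refine hnonneg.lt_of_ne fun h => ?_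
    obtain ⟨t, ht, hw⟩ := (Complex.re_eq_zero_iff_exists_sq_eq_neg w).1 h.symm
    exact hray t ht hw
  · intro hw
    refine ⟨csqrt_sq_of_re_pos hw, fun t ht h => hw.ne' ?_⟩
    exact (Complex.re_eq_zero_iff_exists_sq_eq_neg w).2 ⟨t, ht, h⟩

lemma csqrt_sub_eq_and_not_mem_ray_iff {V z w : ℂ} (h : V - z = w ^ 2) :
    (csqrt (V - z) = w ∧ ∀ t : ℝ, 0 ≤ t → z ≠ V + t) ↔ 0 < w.re := by
  rw [← csqrt_sq_eq_and_sq_ne_neg_iff, h]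
  refine and_congr_right' (forall₂_congr fun t _ => not_congr ⟨fun e => ?_, fun e => ?_⟩)
  · linear_combination -h - e
  · linear_combination -h - e

lemma sub_zalpha_left {α : ℂ} (hα : α ≠ 0) (Vp Vm : ℂ) :
    Vp - zalpha Vp Vm α = (-α / 2 - (Vp - Vm) / (2 * α)) ^ 2 := by
  unfold zalpha
  field_simp
  ring

lemma sub_zalpha_right {α : ℂ} (hα : α ≠ 0) (Vp Vm : ℂ) :
    Vm - zalpha Vp Vm α = (-α / 2 + (Vp - Vm) / (2 * α)) ^ 2 := by
  unfold zalpha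
  field_simp
  ring

lemma re_neg_half_sub_div_two_mul (α v : ℂ) (hα : α ≠ 0) :
    (-α / 2 - v / (2 * α)).re
      = (-(‖α‖ ^ 2 * α.re) - (v.re * α.re + v.im * α.im)) / (2 * ‖α‖ ^ 2) := by
  have hN : ‖α‖ ≠ 0 := norm_ne_zero_iff.2 hα
  simp only [Complex.sub_re, Complex.div_re, Complex.neg_re, Complex.mul_re, Complex.mul_im,
    Complex.neg_im, Complex.normSq_eq_norm_sq]
  norm_num
  field_simp
  ring

lemma re_neg_half_add_div_two_mul (α v : ℂ) (hα : α ≠ 0) :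
    (-α / 2 + v / (2 * α)).re
      = (-(‖α‖ ^ 2 * α.re) + (v.re * α.re + v.im * α.im)) / (2 * ‖α‖ ^ 2) := by
  have hN : ‖α‖ ≠ 0 := norm_ne_zero_iff.2 hα
  simp only [Complex.add_re, Complex.div_re, Complex.neg_re, Complex.mul_re, Complex.mul_im,
    Complex.neg_im, Complex.normSq_eq_norm_sq]
  norm_num
  field_simp
  ring

lemma re_pos_and_re_pos_iff_abs_inner_lt {α : ℂ} (hα : α ≠ 0) (v : ℂ) :
    (0 < (-α / 2 - v / (2 * α)).re ∧ 0 < (-α / 2 + v / (2 * α)).re)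
      ↔ |v.re * α.re + v.im * α.im| < -(‖α‖ ^ 2 * α.re) := by
  have hN : 0 < 2 * ‖α‖ ^ 2 := by positivity
  rw [re_neg_half_sub_div_two_mul α v hα, re_neg_half_add_div_two_mul α v hα,
    div_pos_iff_of_pos_right hN, div_pos_iff_of_pos_right hN, abs_lt]
  constructor <;> rintro ⟨h₁, h₂⟩ <;> constructor <;> linarith

/-- Characterization of when `z(α)` is an eigenvalue of the complex point interaction
operator `𝓛_α`: the square-root identities together with `z(α)` off the rays are
equivalent to positivity of the real parts, which in turn is equivalent to
`α ∈ Ω = {α : |⟨V₊ − V₋, α⟩_{ℝ²}| < −|α|²·Re α}`. -/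
theorem stmt14 (Vp Vm α : ℂ) (hα : α ≠ 0) :
    ((csqrt (Vp - zalpha Vp Vm α) = -α / 2 - (Vp - Vm) / (2 * α) ∧
      csqrt (Vm - zalpha Vp Vm α) = -α / 2 + (Vp - Vm) / (2 * α) ∧
      (∀ t : ℝ, 0 ≤ t → zalpha Vp Vm α ≠ Vp + t) ∧
      (∀ t : ℝ, 0 ≤ t → zalpha Vp Vm α ≠ Vm + t))
    ↔ (0 < (-α / 2 - (Vp - Vm) / (2 * α)).re ∧ 0 < (-α / 2 + (Vp - Vm) / (2 * α)).re)) ∧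
    ((0 < (-α / 2 - (Vp - Vm) / (2 * α)).re ∧ 0 < (-α / 2 + (Vp - Vm) / (2 * α)).re)
    ↔ |(Vp - Vm).re * α.re + (Vp - Vm).im * α.im| < -(‖α‖ ^ 2 * α.re)) := by
  refine ⟨?_, re_pos_and_re_pos_iff_abs_inner_lt hα (Vp - Vm)⟩
  rw [← csqrt_sub_eq_and_not_mem_ray_iff (sub_zalpha_left hα Vp Vm),
    ← csqrt_sub_eq_and_not_mem_ray_iff (sub_zalpha_right hα Vp Vm)]
  tauto
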